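/- Let ω₁, ω₂, ξ₁, ξ₂ ∈ ℂ with ω₁ξ₂ - ω₂ξ₁ ≠ 0. Then the functions ψ_{m,n} (as above) separate points of ℂ² modulo the group generated by L₁, L₂: if ψ_{m,n}(z,y) = ψ_{m,n}(z',y') for all m,n ∈ ℤ, then (z',y') = L₁^a L₂^b (z,y) for some a,b ∈ ℤ. -/

import Mathlib

open Complex

/-- The function `ψ_{m,n}(z,y) = exp[(m(ξ₁z - ω₁y) + n(ξ₂z - ω₂y))/η]`
with `η = (ω₁ξ₂ - ω₂ξ₁)/(2πi)`. -/
noncomputable def psi (ω₁ ω₂ ξ₁ ξ₂ : ℂ) (m n : ℤ) (z y : ℂ) : ℂ :=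
  Complex.exp (((m : ℂ) * (ξ₁ * z - ω₁ * y) + (n : ℂ) * (ξ₂ * z - ω₂ * y)) /
    ((ω₁ * ξ₂ - ω₂ * ξ₁) / (2 * (Real.pi : ℂ) * I)))

/-- Dividing by `η = D / (2πi)` turns the period `2πi` of `exp` into the period `D`. -/
theorem Complex.exists_int_sub_eq_mul_of_exp_div_eq {D u v : ℂ} (hD : D ≠ 0)
    (huv : exp (u / (D / (2 * Real.pi * I))) = exp (v / (D / (2 * Real.pi * I)))) :
    ∃ k : ℤ, v - u = k * D := by
  obtain ⟨k, hk⟩ := exp_eq_exp_iff_exists_int.mp huv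
  refine ⟨-k, ?_⟩
  have h2πI : (2 * Real.pi * I : ℂ) ≠ 0 := two_pi_I_ne_zero
  field_simp at hk
  push_cast
  linear_combination -hk

/-- Cramer's rule for the linear forms `(z, y) ↦ ξᵢ z - ωᵢ y`, whose determinant is
`D = ω₁ξ₂ - ω₂ξ₁`. -/
theorem eq_add_int_mul_of_linear_forms_eq {ω₁ ω₂ ξ₁ ξ₂ z y z' y' : ℂ} {k l : ℤ}
    (hD : ω₁ * ξ₂ - ω₂ * ξ₁ ≠ 0)
    (h₁ : ξ₁ * z' - ω₁ * y' - (ξ₁ * z - ω₁ * y) = k * (ω₁ * ξ₂ - ω₂ * ξ₁))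
    (h₂ : ξ₂ * z' - ω₂ * y' - (ξ₂ * z - ω₂ * y) = l * (ω₁ * ξ₂ - ω₂ * ξ₁)) :
    z' = z + (l : ℂ) * ω₁ + ((-k : ℤ) : ℂ) * ω₂ ∧
      y' = y + (l : ℂ) * ξ₁ + ((-k : ℤ) : ℂ) * ξ₂ := by
  push_cast
  constructor
  · exact mul_left_cancel₀ hD (by linear_combination ω₁ * h₂ - ω₂ * h₁)
  · exact mul_left_cancel₀ hD (by linear_combination ξ₁ * h₂ - ξ₂ * h₁)

/-- if `ω₁ξ₂ - ω₂ξ₁ ≠ 0`, then the family `ψ_{m,n}` separates points of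
`ℂ²` modulo the group generated by the translations `L₁, L₂`. -/
theorem stmt4 (ω₁ ω₂ ξ₁ ξ₂ : ℂ) (h : ω₁ * ξ₂ - ω₂ * ξ₁ ≠ 0)
    (z y z' y' : ℂ)
    (hsep : ∀ m n : ℤ, psi ω₁ ω₂ ξ₁ ξ₂ m n z y = psi ω₁ ω₂ ξ₁ ξ₂ m n z' y') :
    ∃ a b : ℤ, z' = z + (a : ℂ) * ω₁ + (b : ℂ) * ω₂ ∧
               y' = y + (a : ℂ) * ξ₁ + (b : ℂ) * ξ₂ := by
  have h₁₀ := hsep 1 0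
  have h₀₁ := hsep 0 1
  simp only [psi, Int.cast_one, Int.cast_zero, one_mul, zero_mul, add_zero, zero_add] at h₁₀ h₀₁
  obtain ⟨k, hk⟩ := exists_int_sub_eq_mul_of_exp_div_eq h h₁₀
  obtain ⟨l, hl⟩ := exists_int_sub_eq_mul_of_exp_div_eq h h₀₁
  exact ⟨l, -k, eq_add_int_mul_of_linear_forms_eq h hk hl⟩
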